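/- arXiv:2605.02488 — 5 statements merged into one kernel-verified Lean document; each statement's English description precedes it below -/
import Mathlib

section
/- Every temporally stratified program is locally stratified: if the time-abstracted program P′ obtained from a temporal program P (by deleting all object arguments and keeping only the time argument of each atom) is locally stratified via strata B′₁, B′₂, …, then P itself is locally stratified by the strata B₁, B₂, … where a ground atom p(x, t) is placed in Bᵢ iff the abstracted atom p(t) lies in B′ᵢ. -/
/-- A temporal rule: each atom is a predicate together with a time offset `k`,
standing for `p(X, T − k)`, with one time variable `T` per rule. -/
structure TRule (Pred : Type) where
  head : Pred × ℤ
  pos : List (Pred × ℤ)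
  neg : List (Pred × ℤ)

/-- A ground temporal rule: ground temporal atoms are triples of a predicate,
a tuple of object constants, and a time-point. -/
structure TGroundRule (Pred Const : Type) where
  head : Pred × List Const × ℤ
  pos : List (Pred × List Const × ℤ)
  neg : List (Pred × List Const × ℤ)

/-- `g` is a ground instance of the temporal rule `r` at evaluation time `t`:
the predicates and time-points of all atoms match those prescribed by `r` with `T := t`
(object arguments are instantiated arbitrarily). -/
def IsTGroundInstance {Pred Const : Type} (r : TRule Pred) (t : ℤ)
    (g : TGroundRule Pred Const) : Prop :=
  g.head.1 = r.head.1 ∧ g.head.2.2 = t - r.head.2 ∧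
  g.pos.map (fun a => (a.1, a.2.2)) = r.pos.map (fun pk => (pk.1, t - pk.2)) ∧
  g.neg.map (fun a => (a.1, a.2.2)) = r.neg.map (fun pk => (pk.1, t - pk.2))

/-- `lam` is a local stratification of the temporal program `P`: for every ground instance,
positive body atoms lie in strata ≤ the head's stratum and negated body atoms strictly below. -/
def IsTLocalStrat {Pred Const : Type} (P : Set (TRule Pred))
    (lam : Pred × List Const × ℤ → ℕ) : Prop :=
  ∀ r ∈ P, ∀ t : ℤ, ∀ g : TGroundRule Pred Const, IsTGroundInstance r t g →
    (∀ a ∈ g.pos, lam a ≤ lam g.head) ∧ (∀ a ∈ g.neg, lam a < lam g.head)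

/-- `lam'` is a local stratification of the time abstraction `P′` of `P` (each atom
`p(X, τ)` replaced by the unary atom `p(τ)`). -/
def IsAbstractLocalStrat {Pred : Type} (P : Set (TRule Pred)) (lam' : Pred × ℤ → ℕ) : Prop :=
  ∀ r ∈ P, ∀ t : ℤ,
    (∀ pk ∈ r.pos, lam' (pk.1, t - pk.2) ≤ lam' (r.head.1, t - r.head.2)) ∧
    (∀ pk ∈ r.neg, lam' (pk.1, t - pk.2) < lam' (r.head.1, t - r.head.2))


/-!
A ground instance of a rule at time `t` abstracts, atom by atom, to the instance of the
time-abstracted rule at the same `t`; since the strata of ground atoms are read off their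
abstractions, the stratification conditions for `P` are those for `P′`.
-/

namespace IsTGroundInstance

variable {Pred Const : Type} {r : TRule Pred} {t : ℤ} {g : TGroundRule Pred Const}

theorem abstract_head (hg : IsTGroundInstance r t g) :
    (g.head.1, g.head.2.2) = (r.head.1, t - r.head.2) :=
  Prod.ext hg.1 hg.2.1

theorem exists_of_mem_pos (hg : IsTGroundInstance r t g) {a : Pred × List Const × ℤ}
    (ha : a ∈ g.pos) : ∃ pk ∈ r.pos, (pk.1, t - pk.2) = (a.1, a.2.2) :=
  List.mem_map.1 (hg.2.2.1 ▸ List.mem_map_of_mem ha)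

theorem exists_of_mem_neg (hg : IsTGroundInstance r t g) {a : Pred × List Const × ℤ}
    (ha : a ∈ g.neg) : ∃ pk ∈ r.neg, (pk.1, t - pk.2) = (a.1, a.2.2) :=
  List.mem_map.1 (hg.2.2.2 ▸ List.mem_map_of_mem ha)

end IsTGroundInstance

/-- Every temporally stratified program is locally stratified: if the time abstraction `P′`
of `P` is locally stratified via `lam'`, then placing each ground atom `p(x, τ)` in the
stratum of the abstracted atom `p(τ)` yields a local stratification of `P`. -/
theorem temporally_stratified_implies_locally_stratified
    (Pred Const : Type) (P : Set (TRule Pred)) (lam' : Pred × ℤ → ℕ)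
    (h : IsAbstractLocalStrat P lam') :
    IsTLocalStrat (Const := Const) P (fun a => lam' (a.1, a.2.2)) := by
  intro r hr t g hg
  obtain ⟨hpos, hneg⟩ := h r hr t
  refine ⟨fun a ha => ?_, fun a ha => ?_⟩
  · obtain ⟨pk, hpk, hpk_abs⟩ := hg.exists_of_mem_pos ha
    show lam' (a.1, a.2.2) ≤ lam' (g.head.1, g.head.2.2)
    rw [← hpk_abs, hg.abstract_head]
    exact hpos pk hpk
  · obtain ⟨pk, hpk, hpk_abs⟩ := hg.exists_of_mem_neg ha
    show lam' (a.1, a.2.2) < lam' (g.head.1, g.head.2.2)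
    rw [← hpk_abs, hg.abstract_head]
    exact hneg pk hpk
end

section
/- Time-localized soundness of forward-propagating programs: in a forward-propagating temporal program P with stream S, the truth value of any ground atom a(x, t) in the perfect model of P ∪ S depends only on the facts of S with time-stamp ≤ t. Formally, if S and S′ are two streams that agree on all facts with time-stamp at most t, then for every ground atom a(x, t′) with t′ ≤ t, a(x, t′) is in the perfect model of P ∪ S iff it is in the perfect model of P ∪ S′. -/
/-- A ground rule over atoms of type `A`. -/
structure GRule (A : Type) where
  head : A
  pos : List A
  neg : List A

/-- A stream fact `a` viewed as a bodiless rule. -/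
def factRule {A : Type} (a : A) : GRule A := ⟨a, [], []⟩

/-- `lam` is a (local) stratification of the ground program `P`. -/
def IsLocalStratG {A : Type} (P : Set (GRule A)) (lam : A → ℕ) : Prop :=
  ∀ r ∈ P, (∀ b ∈ r.pos, lam b ≤ lam r.head) ∧ (∀ c ∈ r.neg, lam c < lam r.head)

/-- One stratum of bottom-up evaluation: atoms of stratum `n` derivable using `prev`
(the atoms of strata `< n`) for earlier strata and for negation (closed world assumption). -/
inductive StratStep {A : Type} (P : Set (GRule A)) (prev : Set A) (lam : A → ℕ) (n : ℕ) :
    A → Prop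
  | intro (r : GRule A) (hr : r ∈ P) (hhead : lam r.head = n)
      (hpos : ∀ b ∈ r.pos, b ∉ prev → StratStep P prev lam n b)
      (hneg : ∀ c ∈ r.neg, c ∉ prev) : StratStep P prev lam n r.head

/-- The model computed bottom-up through the first `n + 1` strata. -/
def modelUpTo {A : Type} (P : Set (GRule A)) (lam : A → ℕ) : ℕ → Set A
  | 0 => {a | StratStep P ∅ lam 0 a}
  | n + 1 => modelUpTo P lam n ∪ {a | StratStep P (modelUpTo P lam n) lam (n + 1) a}

/-- The perfect model of a stratified program: union of the stratum-wise evaluation. -/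
def perfectModel {A : Type} (P : Set (GRule A)) (lam : A → ℕ) : Set A :=
  ⋃ n, modelUpTo P lam n

/-- `P` is forward-propagating: all body atoms (positive and negated) of a rule have
time-stamps at most the head's time-stamp. -/
def ForwardProp {A : Type} (P : Set (GRule A)) (time : A → ℤ) : Prop :=
  ∀ r ∈ P, (∀ b ∈ r.pos, time b ≤ time r.head) ∧ (∀ c ∈ r.neg, time c ≤ time r.head)

/-!
Every rule deriving an atom at time `≤ t` has its whole body at time `≤ t`, and the stream facts
at time `≤ t` are the same for `S` and `S'`. Hence, by induction on derivations within a stratum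
and then on the strata, the bottom-up evaluations of `P ∪ S` and `P ∪ S'` agree on all atoms at
time `≤ t`.
-/

section TimeLocalization

variable {A B : Type} {time : A → ℤ} {t : ℤ}

def AgreeUpTo (time : A → ℤ) (t : ℤ) (X Y : Set A) : Prop :=
  ∀ a, time a ≤ t → (a ∈ X ↔ a ∈ Y)

namespace AgreeUpTo

theorem refl (X : Set A) : AgreeUpTo time t X X := fun _ _ => Iff.rfl

theorem symm {X Y : Set A} (h : AgreeUpTo time t X Y) : AgreeUpTo time t Y X :=
  fun a ha => (h a ha).symm

theorem union {X X' Y Y' : Set A} (hX : AgreeUpTo time t X X') (hY : AgreeUpTo time t Y Y') :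
    AgreeUpTo time t (X ∪ Y) (X' ∪ Y') :=
  fun a ha => or_congr (hX a ha) (hY a ha)

theorem iUnion {ι : Type*} {X Y : ι → Set A} (h : ∀ i, AgreeUpTo time t (X i) (Y i)) :
    AgreeUpTo time t (⋃ i, X i) (⋃ i, Y i) := by
  intro a ha
  simp only [Set.mem_iUnion]
  exact exists_congr fun i => h i a ha

theorem image {f : A → B} {time' : B → ℤ} (hf : ∀ a, time' (f a) = time a)
    {X Y : Set A} (h : AgreeUpTo time t X Y) :
    AgreeUpTo time' t (f '' X) (f '' Y) := by
  suffices key : ∀ {X Y : Set A}, AgreeUpTo time t X Y →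
      ∀ b, time' b ≤ t → b ∈ f '' X → b ∈ f '' Y from
    fun b hb => ⟨key h b hb, key h.symm b hb⟩
  rintro X Y h _ hb ⟨a, ha, rfl⟩
  exact ⟨a, (h a (hf a ▸ hb)).1 ha, rfl⟩

end AgreeUpTo

theorem ForwardProp.union {P Q : Set (GRule A)} (hP : ForwardProp P time)
    (hQ : ForwardProp Q time) : ForwardProp (P ∪ Q) time := by
  rintro r (hr | hr)
  exacts [hP r hr, hQ r hr]

theorem forwardProp_factRule_image (S : Set A) : ForwardProp (factRule '' S) time := by
  rintro _ ⟨a, -, rfl⟩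
  simp [factRule]

abbrev headTime (time : A → ℤ) (r : GRule A) : ℤ := time r.head

theorem agreeUpTo_union_factRule_image (P : Set (GRule A)) {S S' : Set A}
    (h : AgreeUpTo time t S S') :
    AgreeUpTo (headTime time) t (P ∪ factRule '' S) (P ∪ factRule '' S') :=
  (AgreeUpTo.refl P).union (h.image (f := factRule) fun _ => rfl)

variable {P₁ P₂ : Set (GRule A)} {lam : A → ℕ}

theorem StratStep.of_agreeUpTo (hfp : ForwardProp P₁ time)
    (hP : AgreeUpTo (headTime time) t P₁ P₂) {prev₁ prev₂ : Set A}
    (hprev : AgreeUpTo time t prev₁ prev₂) {n : ℕ} {a : A}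
    (h : StratStep P₁ prev₁ lam n a) (ha : time a ≤ t) : StratStep P₂ prev₂ lam n a := by
  induction h with
  | intro r hr hhead _ hneg ih =>
    have hbody := hfp r hr
    refine StratStep.intro r ((hP r ha).1 hr) hhead ?_ ?_
    · intro b hb hb₂
      have hbt := (hbody.1 b hb).trans ha
      exact ih b hb (fun hb₁ => hb₂ ((hprev b hbt).1 hb₁)) hbt
    · intro c hc hc₂
      exact hneg c hc ((hprev c ((hbody.2 c hc).trans ha)).2 hc₂)

theorem agreeUpTo_stratStep (hfp₁ : ForwardProp P₁ time) (hfp₂ : ForwardProp P₂ time)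
    (hP : AgreeUpTo (headTime time) t P₁ P₂) {prev₁ prev₂ : Set A}
    (hprev : AgreeUpTo time t prev₁ prev₂) (n : ℕ) :
    AgreeUpTo time t {a | StratStep P₁ prev₁ lam n a} {a | StratStep P₂ prev₂ lam n a} :=
  fun _ ha => ⟨fun h => h.of_agreeUpTo hfp₁ hP hprev ha,
    fun h => h.of_agreeUpTo hfp₂ hP.symm hprev.symm ha⟩

theorem agreeUpTo_modelUpTo (hfp₁ : ForwardProp P₁ time) (hfp₂ : ForwardProp P₂ time)
    (hP : AgreeUpTo (headTime time) t P₁ P₂) (n : ℕ) :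
    AgreeUpTo time t (modelUpTo P₁ lam n) (modelUpTo P₂ lam n) := by
  induction n with
  | zero => exact agreeUpTo_stratStep hfp₁ hfp₂ hP (AgreeUpTo.refl ∅) 0
  | succ n ih => exact ih.union (agreeUpTo_stratStep hfp₁ hfp₂ hP ih (n + 1))

theorem agreeUpTo_perfectModel (hfp₁ : ForwardProp P₁ time) (hfp₂ : ForwardProp P₂ time)
    (hP : AgreeUpTo (headTime time) t P₁ P₂) :
    AgreeUpTo time t (perfectModel P₁ lam) (perfectModel P₂ lam) :=
  AgreeUpTo.iUnion (agreeUpTo_modelUpTo hfp₁ hfp₂ hP)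

end TimeLocalization

theorem time_localized_soundness_general (A : Type) (time : A → ℤ)
    (P : Set (GRule A)) (lam : A → ℕ)
    (hfp : ForwardProp P time)
    (S S' : Set A) (t : ℤ)
    (hagree : ∀ a : A, time a ≤ t → (a ∈ S ↔ a ∈ S')) :
    ∀ a : A, time a ≤ t →
      (a ∈ perfectModel (P ∪ factRule '' S) lam ↔
        a ∈ perfectModel (P ∪ factRule '' S') lam) :=
  agreeUpTo_perfectModel (hfp.union (forwardProp_factRule_image S))
    (hfp.union (forwardProp_factRule_image S')) (agreeUpTo_union_factRule_image P hagree)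

/-- Time-localized soundness of forward-propagating programs: in a forward-propagating,
temporally stratified program `P`, if two streams `S` and `S′` agree on all facts with
time-stamp at most `t`, then for every ground atom with time-stamp ≤ `t`, the atom is in
the perfect model of `P ∪ S` iff it is in the perfect model of `P ∪ S′`. -/
theorem time_localized_soundness (A : Type) (time : A → ℤ)
    (P : Set (GRule A)) (lam : A → ℕ)
    (hfp : ForwardProp P time) (hstrat : IsLocalStratG P lam)
    (S S' : Set A) (t : ℤ)
    (hagree : ∀ a : A, time a ≤ t → (a ∈ S ↔ a ∈ S')) :
    ∀ a : A, time a ≤ t →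
      (a ∈ perfectModel (P ∪ factRule '' S) lam ↔
        a ∈ perfectModel (P ∪ factRule '' S') lam) :=
  time_localized_soundness_general A time P lam hfp S S' t hagree
end

section
/- In the k-compatibility construction of trigger graphs, every node constructed at iteration k has depth exactly k−1 in the graph built so far, where the depth of a node is the length of the longest directed path ending at it; consequently, no tuple of nodes is k-compatible with a rule at two different iterations k ≠ k′, so each node tuple is used to construct at most one new node over the whole run. -/
/-- `PathEnd E n v`: there is a directed path of length `n` ending at `v`
in the graph with edge relation `E`. -/
def PathEnd {V : Type} (E : V → V → Prop) : ℕ → V → Prop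
  | 0, _ => True
  | n + 1, v => ∃ u, E u v ∧ PathEnd E n u

/-- `v` has depth `n`: the longest directed path ending at `v` has length `n`. -/
def HasDepth {V : Type} (E : V → V → Prop) (v : V) (n : ℕ) : Prop :=
  PathEnd E n v ∧ ∀ m : ℕ, n < m → ¬ PathEnd E m v

/-- A tuple `us` of nodes is `k`-compatible (with some rule): each node has depth `< k`
and at least one node has depth exactly `k − 1`. -/
def KCompat {V : Type} (E : V → V → Prop) (us : List V) (k : ℕ) : Prop :=
  (∀ u ∈ us, ∃ d, HasDepth E u d ∧ d < k) ∧ ∃ u ∈ us, HasDepth E u (k - 1)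
/-!
A node's depth is one more than the largest depth of its predecessors (and `0` for a
node without predecessors). The construction at iteration `k ≥ 2` draws predecessors of
depth `< k - 1`, one of them of depth exactly `k - 2`, so the new node has depth `k - 1`.
Conversely, a `k`-compatible tuple has maximal depth exactly `k - 1`, which determines `k`.
-/

variable {V : Type} {E : V → V → Prop}

theorem PathEnd.exists_rel_of_pos {v : V} {m : ℕ} (h : PathEnd E m v) (hm : 0 < m) :
    ∃ u, E u v ∧ PathEnd E (m - 1) u := by
  obtain ⟨m, rfl⟩ : ∃ m', m = m' + 1 := ⟨m - 1, by omega⟩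
  exact h

theorem HasDepth.unique {v : V} {n m : ℕ} (hn : HasDepth E v n) (hm : HasDepth E v m) :
    n = m := by
  by_contra hne
  rcases Nat.lt_or_gt_of_ne hne with hlt | hlt
  · exact hn.2 m hlt hm.1
  · exact hm.2 n hlt hn.1

theorem hasDepth_zero_of_forall_not_rel {v : V} (hv : ∀ u, ¬ E u v) : HasDepth E v 0 := by
  refine ⟨trivial, fun m hm hpath => ?_⟩
  obtain ⟨u, huv, _⟩ := hpath.exists_rel_of_pos hm
  exact hv u huv

theorem hasDepth_succ_of_rel {v : V} {n : ℕ}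
    (hlt : ∀ u, E u v → ∃ d, HasDepth E u d ∧ d < n + 1)
    (hex : ∃ u, E u v ∧ HasDepth E u n) : HasDepth E v (n + 1) := by
  obtain ⟨u, huv, hu⟩ := hex
  refine ⟨⟨u, huv, hu.1⟩, fun m hm hpath => ?_⟩
  obtain ⟨w, hwv, hw⟩ := hpath.exists_rel_of_pos (by omega)
  obtain ⟨d, hd, hdn⟩ := hlt w hwv
  exact hd.2 (m - 1) (by omega) hw

theorem KCompat.unique {us : List V} {k k' : ℕ} (h : KCompat E us k) (h' : KCompat E us k') :
    k = k' := by
  obtain ⟨hlt, u, hu, hdu⟩ := h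
  obtain ⟨hlt', u', hu', hdu'⟩ := h'
  obtain ⟨d, hd, hdk'⟩ := hlt' u hu
  obtain ⟨d', hd', hd'k⟩ := hlt u' hu'
  have := hdu.unique hd
  have := hdu'.unique hd'
  omega

/-- In the `k`-compatibility construction of trigger graphs — where nodes constructed at
iteration `1` are leaves, and a node constructed at iteration `k ≥ 2` has its incoming
edges from nodes of depth `< k − 1`, at least one of which has depth exactly `k − 2` —
every node constructed at iteration `k` has depth exactly `k − 1`; consequently, no tuple
of nodes is `k`-compatible at two different iterations, so each node tuple is used to
construct at most one new node over the whole run. -/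
theorem kcompat_depth_unique (V : Type) (E : V → V → Prop) (iter : V → ℕ)
    (hiter : ∀ v, 1 ≤ iter v)
    (hleaf : ∀ v, iter v = 1 → ∀ u, ¬ E u v)
    (hbuild : ∀ v, 2 ≤ iter v →
      (∀ u, E u v → ∃ d, HasDepth E u d ∧ d < iter v - 1) ∧
      (∃ u, E u v ∧ HasDepth E u (iter v - 2))) :
    (∀ v, HasDepth E v (iter v - 1)) ∧
    (∀ (us : List V) (k k' : ℕ), 2 ≤ k → 2 ≤ k' →
      KCompat E us k → KCompat E us k' → k = k') := by
  refine ⟨fun v => ?_, fun us k k' _ _ h h' => h.unique h'⟩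
  rcases Nat.lt_or_ge (iter v) 2 with hv | hv
  · obtain hv1 : iter v = 1 := by have := hiter v; omega
    simpa only [hv1] using hasDepth_zero_of_forall_not_rel (hleaf v hv1)
  · obtain ⟨n, hn⟩ : ∃ n, iter v = n + 2 := ⟨iter v - 2, by omega⟩
    obtain ⟨hlt, hex⟩ := hbuild v hv
    simp only [hn, Nat.add_sub_cancel] at hlt hex ⊢
    exact hasDepth_succ_of_rel hlt hex
end

section
/- Equivalence of LARS at-window conditions with window-constrained atoms: for any stream S, evaluation time t, window length d, and ground atom p(x), the LARS condition ⊞ᵈ@_{t′} p(x) is satisfied at time t over S if and only if p(x, t′) ∈ S and t − d ≤ t′ ≤ t. Therefore, under the substitution t′ := t − i, the condition is satisfiable only for i ∈ {0, 1, …, d}, and the replacement of a rule containing ⊞ᵈ@_{T′} p(X) by the d+1 rules obtained by mapping T′ ↦ T − i for i = 0,…,d preserves the set of derivable ground head atoms at every time-point. -/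
/-!
The window `t - d ≤ t' ≤ t` contains exactly the integers `t - i` with `i ∈ {0, …, d}`, so an
existential over the window time `t'` is the same as a finite disjunction over the offsets `i`.
-/

/-- LARS semantics of the at-window condition: `⊞ᵈ@_{t′} p(x)` holds at evaluation time `t`
over stream `S` iff `p(x, t′) ∈ S` and `t − d ≤ t′ ≤ t`. -/
def AtWindow {Const : Type} (S : Const → ℤ → Prop) (d : ℕ) (t t' : ℤ) (x : Const) : Prop :=
  S x t' ∧ t - (d : ℤ) ≤ t' ∧ t' ≤ t

theorem Int.exists_nat_le_eq_sub_iff {d : ℕ} {t t' : ℤ} :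
    (∃ i : ℕ, i ≤ d ∧ t' = t - i) ↔ t - d ≤ t' ∧ t' ≤ t := by
  constructor
  · rintro ⟨i, hi, rfl⟩
    omega
  · rintro ⟨hlo, hhi⟩
    exact ⟨(t - t').toNat, by omega, by omega⟩

section AtWindow

variable {Const : Type} {S : Const → ℤ → Prop} {d : ℕ} {t t' : ℤ} {x : Const}

theorem atWindow_iff_exists_offset :
    AtWindow S d t t' x ↔ S x t' ∧ ∃ i : ℕ, i ≤ d ∧ t' = t - i := by
  rw [Int.exists_nat_le_eq_sub_iff]
  rfl

theorem exists_atWindow_and_iff (C : ℤ → Prop) :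
    (∃ t', AtWindow S d t t' x ∧ C t') ↔ ∃ i : ℕ, i ≤ d ∧ S x (t - i) ∧ C (t - i) := by
  simp only [atWindow_iff_exists_offset]
  constructor
  · rintro ⟨_, ⟨hS, i, hi, rfl⟩, hC⟩
    exact ⟨i, hi, hS, hC⟩
  · rintro ⟨i, hi, hS, hC⟩
    exact ⟨t - i, ⟨hS, i, hi, rfl⟩, hC⟩

end AtWindow

/-- Equivalence of LARS at-window conditions with window-constrained atoms: the condition
`⊞ᵈ@_{t′} p(x)` is satisfiable only for `t′ = t − i` with `i ∈ {0, …, d}`, and, for any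
remaining rule conditions `C` (depending on `t′`), replacing a rule containing
`⊞ᵈ@_{T′} p(X)` by the `d + 1` rules obtained under the substitutions `T′ ↦ T − i`,
`i = 0, …, d`, preserves the set of derivable ground head atoms at every time-point. -/
theorem at_window_translation (Const : Type) (S : Const → ℤ → Prop)
    (d : ℕ) (x : Const) (t : ℤ) (C : ℤ → Prop) :
    (∀ t' : ℤ, AtWindow S d t t' x → ∃ i : ℕ, i ≤ d ∧ t' = t - (i : ℤ)) ∧
    ((∃ t' : ℤ, AtWindow S d t t' x ∧ C t') ↔
      (∃ i : ℕ, i ≤ d ∧ S x (t - (i : ℤ)) ∧ C (t - (i : ℤ)))) :=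
  ⟨fun _ h => (atWindow_iff_exists_offset.1 h).2, exists_atWindow_and_iff C⟩
end

section
/- Monotone growth of the model under streaming evaluation: let P be a forward-propagating, temporally stratified temporal program, and let S_{≤t} denote the facts of stream S with time-stamp at most t. Then the perfect model of P ∪ S_{≤t} restricted to atoms with time-stamp at most t equals the perfect model of P ∪ S restricted to atoms with time-stamp at most t; in particular, as t increases, the sequence of these restricted perfect models is monotonically increasing (each is contained in the next), so streaming evaluation never needs to retract previously derived facts. -/
/-- The prefix `S_{≤t}` of a stream. -/
def streamUpTo {A : Type} (time : A → ℤ) (S : Set A) (t : ℤ) : Set A :=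
  {a ∈ S | time a ≤ t}

section Transfer

variable {A : Type} {time : A → ℤ} {lam : A → ℕ} {t : ℤ}

theorem ForwardProp.union_factRule {P : Set (GRule A)} (hfp : ForwardProp P time) (S : Set A) :
    ForwardProp (P ∪ factRule '' S) time := by
  rintro r (hr | ⟨a, -, rfl⟩)
  · exact hfp r hr
  · simp [factRule]

theorem StratStep.of_agree {P₁ P₂ : Set (GRule A)} {prev₁ prev₂ : Set A} {n : ℕ} {a : A}
    (hfp : ForwardProp P₁ time) (hP : ∀ r ∈ P₁, time r.head ≤ t → r ∈ P₂)
    (hprev : ∀ b, time b ≤ t → (b ∈ prev₁ ↔ b ∈ prev₂))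
    (h : StratStep P₁ prev₁ lam n a) (ha : time a ≤ t) :
    StratStep P₂ prev₂ lam n a := by
  induction h with
  | intro r hr hhead _ hneg ih =>
    refine .intro r (hP r hr ha) hhead (fun b hb hb₂ => ?_) (fun c hc hc₂ => ?_)
    · have hbt : time b ≤ t := ((hfp r hr).1 b hb).trans ha
      exact ih b hb (fun hb₁ => hb₂ ((hprev b hbt).1 hb₁)) hbt
    · have hct : time c ≤ t := ((hfp r hr).2 c hc).trans ha
      exact hneg c hc ((hprev c hct).2 hc₂)

theorem mem_modelUpTo_iff_of_agree {P₁ P₂ : Set (GRule A)}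
    (hfp₁ : ForwardProp P₁ time) (hfp₂ : ForwardProp P₂ time)
    (hP : ∀ r, time r.head ≤ t → (r ∈ P₁ ↔ r ∈ P₂)) (n : ℕ) :
    ∀ a, time a ≤ t → (a ∈ modelUpTo P₁ lam n ↔ a ∈ modelUpTo P₂ lam n) := by
  have transfer {prev₁ prev₂ : Set A} (hprev : ∀ b, time b ≤ t → (b ∈ prev₁ ↔ b ∈ prev₂))
      (m : ℕ) (a : A) (ha : time a ≤ t) :
      StratStep P₁ prev₁ lam m a ↔ StratStep P₂ prev₂ lam m a :=
    ⟨fun h => h.of_agree hfp₁ (fun r hr₁ hr => (hP r hr).1 hr₁) hprev ha,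
      fun h => h.of_agree hfp₂ (fun r hr₂ hr => (hP r hr).2 hr₂)
        (fun b hb => (hprev b hb).symm) ha⟩
  induction n with
  | zero => exact transfer (fun _ _ => Iff.rfl) 0
  | succ n ih =>
    intro a ha
    simp only [modelUpTo, Set.mem_union, Set.mem_ofPred_eq]
    exact or_congr (ih a ha) (transfer ih (n + 1) a ha)

theorem mem_perfectModel_iff_of_agree {P₁ P₂ : Set (GRule A)}
    (hfp₁ : ForwardProp P₁ time) (hfp₂ : ForwardProp P₂ time)
    (hP : ∀ r, time r.head ≤ t → (r ∈ P₁ ↔ r ∈ P₂)) {a : A} (ha : time a ≤ t) :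
    a ∈ perfectModel P₁ lam ↔ a ∈ perfectModel P₂ lam := by
  simp only [perfectModel, Set.mem_iUnion]
  exact exists_congr fun n => mem_modelUpTo_iff_of_agree hfp₁ hfp₂ hP n a ha

theorem mem_union_factRule_streamUpTo_iff (P : Set (GRule A)) (S : Set A) (r : GRule A)
    (hr : time r.head ≤ t) :
    r ∈ P ∪ factRule '' streamUpTo time S t ↔ r ∈ P ∪ factRule '' S := by
  refine or_congr Iff.rfl
    ⟨fun ⟨a, ha, hr'⟩ => ⟨a, ha.1, hr'⟩, fun ⟨a, ha, hr'⟩ => ⟨a, ⟨ha, ?_⟩, hr'⟩⟩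
  rwa [← hr'] at hr

end Transfer

theorem streaming_monotone_growth_general (A : Type) (time : A → ℤ)
    (P : Set (GRule A)) (lam : A → ℕ)
    (hfp : ForwardProp P time)
    (S : Set A) :
    (∀ t : ℤ,
      {a ∈ perfectModel (P ∪ factRule '' streamUpTo time S t) lam | time a ≤ t} =
      {a ∈ perfectModel (P ∪ factRule '' S) lam | time a ≤ t}) ∧
    (∀ t : ℤ,
      {a ∈ perfectModel (P ∪ factRule '' streamUpTo time S t) lam | time a ≤ t} ⊆
      {a ∈ perfectModel (P ∪ factRule '' streamUpTo time S (t + 1)) lam | time a ≤ t + 1}) := by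
  have prefix_eq (t : ℤ) :
      {a ∈ perfectModel (P ∪ factRule '' streamUpTo time S t) lam | time a ≤ t} =
      {a ∈ perfectModel (P ∪ factRule '' S) lam | time a ≤ t} := by
    ext a
    simp only [Set.mem_ofPred_eq, and_congr_left_iff]
    exact mem_perfectModel_iff_of_agree (hfp.union_factRule _) (hfp.union_factRule S)
      (mem_union_factRule_streamUpTo_iff P S)
  refine ⟨prefix_eq, fun t => ?_⟩
  rw [prefix_eq t, prefix_eq (t + 1)]
  exact fun a ⟨ha, hat⟩ => ⟨ha, hat.trans (by omega)⟩

/-- Monotone growth of the model under streaming evaluation: for a forward-propagating,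
temporally stratified program `P`, the perfect model of `P ∪ S_{≤t}` restricted to atoms
with time-stamp ≤ `t` equals the perfect model of `P ∪ S` restricted to time-stamp ≤ `t`;
moreover these restricted models grow monotonically with `t`, so streaming evaluation never
retracts previously derived facts. -/
theorem streaming_monotone_growth (A : Type) (time : A → ℤ)
    (P : Set (GRule A)) (lam : A → ℕ)
    (hfp : ForwardProp P time) (hstrat : IsLocalStratG P lam)
    (S : Set A) :
    (∀ t : ℤ,
      {a ∈ perfectModel (P ∪ factRule '' streamUpTo time S t) lam | time a ≤ t} =
      {a ∈ perfectModel (P ∪ factRule '' S) lam | time a ≤ t}) ∧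
    (∀ t : ℤ,
      {a ∈ perfectModel (P ∪ factRule '' streamUpTo time S t) lam | time a ≤ t} ⊆
      {a ∈ perfectModel (P ∪ factRule '' streamUpTo time S (t + 1)) lam | time a ≤ t + 1}) :=
  streaming_monotone_growth_general A time P lam hfp S
end
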